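/- arXiv:2404.09236 — 7 statements merged into one kernel-verified Lean document; each statement's English description precedes it below -/
import Mathlib

section
/- In the cycle convexity, for any two finite graphs G1 and G2 each with at least 2 vertices, the convexity number of the join G1 ∨ G2 equals max(α(G1), α(G2)), where α denotes the independence number. -/
open SimpleGraph Set

variable {V : Type*}

/-- The interval function of the cycle convexity: `S` together with all vertices `u` such that
the subgraph induced by `S ∪ {u}` has a cycle containing `u`. -/
def cycInt (G : SimpleGraph V) (S : Set V) : Set V :=
  S ∪ {u | ∃ w : G.Walk u u, w.IsCycle ∧ ∀ x ∈ w.support, x ∈ S ∪ {u}}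

/-- The convex hull in the cycle convexity, obtained by iterating `cycInt`. -/
def cycHull (G : SimpleGraph V) (S : Set V) : Set V :=
  ⋃ k, (cycInt G)^[k] S

/-- A set is convex in the cycle convexity iff it is a fixed point of the interval function. -/
def CycConvex (G : SimpleGraph V) (S : Set V) : Prop := cycInt G S = S

/-- A hull set: a set whose convex hull is the whole vertex set. -/
def IsHullSet (G : SimpleGraph V) (S : Set V) : Prop := cycHull G S = Set.univ

/-- The convexity number: the largest cardinality of a convex set different from `V(G)`. -/
noncomputable def conNum (G : SimpleGraph V) : ℕ :=
  sSup {n | ∃ S : Set V, CycConvex G S ∧ S ≠ Set.univ ∧ S.ncard = n}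

/-- The percolation time: the largest `k > 0` such that some hull set `S` satisfies
`I^[k-1] S ≠ V(G)`; `0` if no such `k` exists. -/
noncomputable def percTime (G : SimpleGraph V) : ℕ :=
  sSup {k | 0 < k ∧ ∃ S : Set V, IsHullSet G S ∧ (cycInt G)^[k-1] S ≠ Set.univ}

/-- A set is convexly independent if no element lies in the hull of the others. -/
def ConvIndep (G : SimpleGraph V) (S : Set V) : Prop :=
  ∀ v ∈ S, v ∉ cycHull G (S \ {v})

/-- The independence number (as a supremum of cardinalities of independent sets). -/
noncomputable def alphaNum (G : SimpleGraph V) : ℕ :=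
  sSup {n | ∃ S : Set V, S.Pairwise (fun a b => ¬ G.Adj a b) ∧ S.ncard = n}

/-- The join of two graphs: their disjoint union together with all edges between the parts. -/
def joinGraph {V1 V2 : Type*} (G1 : SimpleGraph V1) (G2 : SimpleGraph V2) :
    SimpleGraph (V1 ⊕ V2) where
  Adj x y :=
    (∃ a b, x = Sum.inl a ∧ y = Sum.inl b ∧ G1.Adj a b) ∨
    (∃ a b, x = Sum.inr a ∧ y = Sum.inr b ∧ G2.Adj a b) ∨
    (∃ a b, x = Sum.inl a ∧ y = Sum.inr b) ∨
    (∃ a b, x = Sum.inr a ∧ y = Sum.inl b)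
  symm := by
    constructor
    rintro x y (⟨a,b,rfl,rfl,h⟩|⟨a,b,rfl,rfl,h⟩|⟨a,b,rfl,rfl⟩|⟨a,b,rfl,rfl⟩)
    · exact Or.inl ⟨b, a, rfl, rfl, h.symm⟩
    · exact Or.inr (Or.inl ⟨b, a, rfl, rfl, h.symm⟩)
    · exact Or.inr (Or.inr (Or.inr ⟨b, a, rfl, rfl⟩))
    · exact Or.inr (Or.inr (Or.inl ⟨b, a, rfl, rfl⟩))
  loopless := by
    constructor
    rintro x (⟨a,b,rfl,h,hadj⟩|⟨a,b,rfl,h,hadj⟩|⟨a,b,rfl,h⟩|⟨a,b,rfl,h⟩) <;>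
      simp_all


section Helpers

lemma cycle_edge_avoid {G : SimpleGraph V} {u : V} (w : G.Walk u u) (hw : w.IsCycle) :
    ∃ x y, G.Adj x y ∧ x ∈ w.support ∧ y ∈ w.support ∧ x ≠ u ∧ y ≠ u := by
  cases w with
  | nil => exact absurd hw (by simp [SimpleGraph.Walk.isCycle_def])
  | @cons _ a _ h p =>
    cases p with
    | nil => exact absurd h (G.loopless.irrefl u)
    | @cons _ b _ h' r =>
      refine ⟨a, b, h', by simp, by simp, h.ne', ?_⟩
      intro hb
      subst hb
      have h3 := hw.three_le_length
      simp only [SimpleGraph.Walk.length_cons] at h3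
      have hr : ¬ r.Nil := by
        intro hn
        have := SimpleGraph.Walk.nil_iff_length_eq.mp hn
        omega
      have hnd : (SimpleGraph.Walk.cons h (SimpleGraph.Walk.cons h' r)).support.tail.Nodup :=
        hw.2
      simp only [SimpleGraph.Walk.support_cons, List.tail_cons] at hnd
      have hnd1 : r.support.Nodup := (List.nodup_cons.mp hnd).2
      have hmem : b ∈ r.support.tail := by
        rw [← SimpleGraph.Walk.support_tail_of_not_nil r hr]
        exact SimpleGraph.Walk.end_mem_support _
      rw [r.support_eq_cons] at hnd1
      exact (List.nodup_cons.mp hnd1).1 hmem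

lemma isCycle_triangle {G : SimpleGraph V} {u x y : V}
    (h1 : G.Adj u x) (h2 : G.Adj x y) (h3 : G.Adj y u) (hxy : x ≠ y) (hxu : x ≠ u) (hyu : y ≠ u) :
    (Walk.cons h1 (Walk.cons h2 (Walk.cons h3 Walk.nil))).IsCycle := by
  simp [Walk.isCycle_def, Walk.isTrail_def, Sym2.eq_iff]
  tauto

lemma isCycle_square {G : SimpleGraph V} {u x y z : V}
    (h1 : G.Adj u x) (h2 : G.Adj x y) (h3 : G.Adj y z) (h4 : G.Adj z u)
    (hxy : x ≠ y) (hxz : x ≠ z) (hxu : x ≠ u) (hyz : y ≠ z) (hyu : y ≠ u) (hzu : z ≠ u) :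
    (Walk.cons h1 (Walk.cons h2 (Walk.cons h3 (Walk.cons h4 Walk.nil)))).IsCycle := by
  simp [Walk.isCycle_def, Walk.isTrail_def, Sym2.eq_iff]
  tauto

variable {V1 V2 : Type*} {G1 : SimpleGraph V1} {G2 : SimpleGraph V2}

lemma joinAdj_inl_inr (a : V1) (b : V2) : (joinGraph G1 G2).Adj (Sum.inl a) (Sum.inr b) :=
  Or.inr (Or.inr (Or.inl ⟨a, b, rfl, rfl⟩))

lemma joinAdj_inr_inl (a : V2) (b : V1) : (joinGraph G1 G2).Adj (Sum.inr a) (Sum.inl b) :=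
  Or.inr (Or.inr (Or.inr ⟨a, b, rfl, rfl⟩))

lemma joinAdj_inl_inl {a b : V1} (h : G1.Adj a b) :
    (joinGraph G1 G2).Adj (Sum.inl a) (Sum.inl b) :=
  Or.inl ⟨a, b, rfl, rfl, h⟩

lemma joinAdj_inr_inr {a b : V2} (h : G2.Adj a b) :
    (joinGraph G1 G2).Adj (Sum.inr a) (Sum.inr b) :=
  Or.inr (Or.inl ⟨a, b, rfl, rfl, h⟩)

lemma joinAdj_inl_inl_iff {a b : V1} :
    (joinGraph G1 G2).Adj (Sum.inl a) (Sum.inl b) ↔ G1.Adj a b := by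
  constructor
  · rintro (⟨x,y,hx,hy,h⟩|⟨x,y,hx,hy,h⟩|⟨x,y,hx,hy⟩|⟨x,y,hx,hy⟩) <;> simp_all
  · exact joinAdj_inl_inl

lemma joinAdj_inr_inr_iff {a b : V2} :
    (joinGraph G1 G2).Adj (Sum.inr a) (Sum.inr b) ↔ G2.Adj a b := by
  constructor
  · rintro (⟨x,y,hx,hy,h⟩|⟨x,y,hx,hy,h⟩|⟨x,y,hx,hy⟩|⟨x,y,hx,hy⟩) <;> simp_all
  · exact joinAdj_inr_inr

/-- Independent sets on one side of the join are convex. -/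
lemma indep_convex_inl (S1 : Set V1) (hS : S1.Pairwise fun a b => ¬ G1.Adj a b) :
    CycConvex (joinGraph G1 G2) (Sum.inl '' S1) := by
  apply Set.eq_of_subset_of_subset _ (Set.subset_union_left)
  rintro u (hu | ⟨w, hw, hsupp⟩)
  · exact hu
  · exfalso
    obtain ⟨x, y, hadj, hx, hy, hxu, hyu⟩ := cycle_edge_avoid w hw
    have hxS : x ∈ Sum.inl '' S1 := by
      rcases hsupp x hx with h | h
      · exact h
      · exact absurd h hxu
    have hyS : y ∈ Sum.inl '' S1 := by
      rcases hsupp y hy with h | h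
      · exact h
      · exact absurd h hyu
    obtain ⟨a, ha, rfl⟩ := hxS
    obtain ⟨b, hb, rfl⟩ := hyS
    have hab : a ≠ b := fun h => hadj.ne (by rw [h])
    exact hS ha hb hab (joinAdj_inl_inl_iff.mp hadj)

lemma indep_convex_inr (S2 : Set V2) (hS : S2.Pairwise fun a b => ¬ G2.Adj a b) :
    CycConvex (joinGraph G1 G2) (Sum.inr '' S2) := by
  apply Set.eq_of_subset_of_subset _ (Set.subset_union_left)
  rintro u (hu | ⟨w, hw, hsupp⟩)
  · exact hu
  · exfalso
    obtain ⟨x, y, hadj, hx, hy, hxu, hyu⟩ := cycle_edge_avoid w hw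
    have hxS : x ∈ Sum.inr '' S2 := by
      rcases hsupp x hx with h | h
      · exact h
      · exact absurd h hxu
    have hyS : y ∈ Sum.inr '' S2 := by
      rcases hsupp y hy with h | h
      · exact h
      · exact absurd h hyu
    obtain ⟨a, ha, rfl⟩ := hxS
    obtain ⟨b, hb, rfl⟩ := hyS
    have hab : a ≠ b := fun h => hadj.ne (by rw [h])
    exact hS ha hb hab (joinAdj_inr_inr_iff.mp hadj)

/-- Basic facts about `alphaNum` over a finite vertex type. -/
lemma alpha_spec {W : Type*} [Fintype W] (G : SimpleGraph W) :
    (∃ S : Set W, S.Pairwise (fun a b => ¬ G.Adj a b) ∧ S.ncard = alphaNum G) ∧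
    ∀ S : Set W, S.Pairwise (fun a b => ¬ G.Adj a b) → S.ncard ≤ alphaNum G := by
  have hbdd : BddAbove {n | ∃ S : Set W, S.Pairwise (fun a b => ¬ G.Adj a b) ∧ S.ncard = n} := by
    refine ⟨Fintype.card W, ?_⟩
    rintro n ⟨S, -, rfl⟩
    calc S.ncard ≤ (Set.univ : Set W).ncard :=
          Set.ncard_le_ncard (Set.subset_univ S) Set.finite_univ
      _ = Fintype.card W := by rw [Set.ncard_univ, Nat.card_eq_fintype_card]
  have hne : {n | ∃ S : Set W, S.Pairwise (fun a b => ¬ G.Adj a b) ∧ S.ncard = n}.Nonempty :=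
    ⟨0, ∅, by simp, by simp⟩
  constructor
  · exact Nat.sSup_mem hne hbdd
  · intro S hS
    exact le_csSup hbdd ⟨S, hS, rfl⟩

end Helpers

section Main
variable {V1 V2 : Type*} [Fintype V1] [Fintype V2] {G1 : SimpleGraph V1} {G2 : SimpleGraph V2}

lemma convex_card_le (h1 : 2 ≤ Fintype.card V1) (h2 : 2 ≤ Fintype.card V2)
    (S : Set (V1 ⊕ V2)) (hconv : CycConvex (joinGraph G1 G2) S) (hneU : S ≠ Set.univ) :
    S.ncard ≤ max (alphaNum G1) (alphaNum G2) := by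
  set M := max (alphaNum G1) (alphaNum G2) with hM
  set S1 : Set V1 := Sum.inl ⁻¹' S with hS1def
  set S2 : Set V2 := Sum.inr ⁻¹' S with hS2def
  have hSeq : S = Sum.inl '' S1 ∪ Sum.inr '' S2 := by
    ext x
    cases x with
    | inl a => simp [hS1def, hS2def]
    | inr b => simp [hS1def, hS2def]
  have hcard : S.ncard = S1.ncard + S2.ncard := by
    rw [hSeq, Set.ncard_union_eq ?_ (Set.toFinite _) (Set.toFinite _),
      Set.ncard_image_of_injective _ Sum.inl_injective,
      Set.ncard_image_of_injective _ Sum.inr_injective]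
    rw [Set.disjoint_left]
    rintro x ⟨a, -, rfl⟩ ⟨b, -, hb⟩
    exact Sum.inl_ne_inr hb.symm
  -- key: no outside vertex admits a cycle in S ∪ {u}
  have key : ∀ u ∉ S, ∀ w : (joinGraph G1 G2).Walk u u, w.IsCycle →
      ¬ (∀ x ∈ w.support, x ∈ S ∪ {u}) := by
    intro u hu w hw hsupp
    exact hu (hconv ▸ Set.mem_union_right _ ⟨w, hw, hsupp⟩)
  obtain ⟨u, hu⟩ := (Set.ne_univ_iff_exists_notMem S).mp hneU
  obtain ⟨spec1mem, spec1le⟩ := alpha_spec G1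
  obtain ⟨spec2mem, spec2le⟩ := alpha_spec G2
  rcases Set.eq_empty_or_nonempty S2 with h2e | ⟨b0, hb0⟩
  · -- S lives on the inl side: S1 must be independent
    have hind : S1.Pairwise (fun a b => ¬ G1.Adj a b) := by
      intro a ha b hb hab hadj
      obtain ⟨c⟩ : Nonempty V2 := Fintype.card_pos_iff.mp (by omega)
      have hcS : (Sum.inr c : V1 ⊕ V2) ∉ S := fun h =>
        (Set.eq_empty_iff_forall_notMem.mp h2e c) h
      refine key _ hcS _ (isCycle_triangle (joinAdj_inr_inl c a) (joinAdj_inl_inl hadj)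
        (joinAdj_inl_inr b c) (by simp [hab]) (by simp) (by simp)) ?_
      intro x hx
      simp only [Walk.support_cons, Walk.support_nil, List.mem_cons,
        List.mem_singleton] at hx
      rcases hx with rfl | rfl | rfl | rfl | h
      · exact Or.inr rfl
      · exact Or.inl ha
      · exact Or.inl hb
      · exact Or.inr rfl
      · exact absurd h List.not_mem_nil
    calc S.ncard = S1.ncard := by simp [hcard, h2e]
      _ ≤ alphaNum G1 := spec1le S1 hind
      _ ≤ M := le_max_left _ _
  · rcases Set.eq_empty_or_nonempty S1 with h1e | ⟨a0, ha0⟩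
    · have hind : S2.Pairwise (fun a b => ¬ G2.Adj a b) := by
        intro a ha b hb hab hadj
        obtain ⟨c⟩ : Nonempty V1 := Fintype.card_pos_iff.mp (by omega)
        have hcS : (Sum.inl c : V1 ⊕ V2) ∉ S := fun h =>
          (Set.eq_empty_iff_forall_notMem.mp h1e c) h
        refine key _ hcS _ (isCycle_triangle (joinAdj_inl_inr c a) (joinAdj_inr_inr hadj)
          (joinAdj_inr_inl b c) (by simp [hab]) (by simp) (by simp)) ?_
        intro x hx
        simp only [Walk.support_cons, Walk.support_nil, List.mem_cons,
          List.mem_singleton] at hx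
        rcases hx with rfl | rfl | rfl | rfl | h
        · exact Or.inr rfl
        · exact Or.inl ha
        · exact Or.inl hb
        · exact Or.inr rfl
        · exact absurd h List.not_mem_nil
      calc S.ncard = S2.ncard := by simp [hcard, h1e]
        _ ≤ alphaNum G2 := spec2le S2 hind
        _ ≤ M := le_max_right _ _
    · -- mixed case
      have key2 : ∀ c, Sum.inl c ∉ S → ∀ b1 ∈ S2, b1 = b0 := by
        intro c hc b1 hb1
        by_contra hne12
        refine key _ hc _ (isCycle_square (joinAdj_inl_inr c b1) (joinAdj_inr_inl b1 a0)
          (joinAdj_inl_inr a0 b0) (joinAdj_inr_inl b0 c)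
          (by simp) (by simp [hne12]) (by simp) (by simp)
          (by simp [show a0 ≠ c from fun h => hc (h ▸ ha0)]) (by simp)) ?_
        intro x hx
        simp only [Walk.support_cons, Walk.support_nil, List.mem_cons,
          List.mem_singleton] at hx
        rcases hx with rfl | rfl | rfl | rfl | rfl | h
        · exact Or.inr rfl
        · exact Or.inl hb1
        · exact Or.inl ha0
        · exact Or.inl hb0
        · exact Or.inr rfl
        · exact absurd h List.not_mem_nil
      have key1 : ∀ c, Sum.inr c ∉ S → ∀ a1 ∈ S1, a1 = a0 := by
        intro c hc a1 ha1
        by_contra hne12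
        refine key _ hc _ (isCycle_square (joinAdj_inr_inl c a1) (joinAdj_inl_inr a1 b0)
          (joinAdj_inr_inl b0 a0) (joinAdj_inl_inr a0 c)
          (by simp) (by simp [hne12]) (by simp) (by simp)
          (by simp [show b0 ≠ c from fun h => hc (h ▸ hb0)]) (by simp)) ?_
        intro x hx
        simp only [Walk.support_cons, Walk.support_nil, List.mem_cons,
          List.mem_singleton] at hx
        rcases hx with rfl | rfl | rfl | rfl | rfl | h
        · exact Or.inr rfl
        · exact Or.inl ha1
        · exact Or.inl hb0
        · exact Or.inl ha0
        · exact Or.inr rfl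
        · exact absurd h List.not_mem_nil
      have hsubs : S1 ⊆ {a0} ∧ S2 ⊆ {b0} := by
        cases u with
        | inl c =>
          have hS2sub : S2 ⊆ {b0} := fun b hb => key2 c hu b hb
          obtain ⟨d, hd⟩ := Fintype.exists_ne_of_one_lt_card (by omega) b0
          have hdS : Sum.inr d ∉ S := fun h => hd (hS2sub h)
          exact ⟨fun a ha => key1 d hdS a ha, hS2sub⟩
        | inr c =>
          have hS1sub : S1 ⊆ {a0} := fun a ha => key1 c hu a ha
          obtain ⟨d, hd⟩ := Fintype.exists_ne_of_one_lt_card (by omega) a0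
          have hdS : Sum.inl d ∉ S := fun h => hd (hS1sub h)
          exact ⟨hS1sub, fun b hb => key2 d hdS b hb⟩
      obtain ⟨hS1sub, hS2sub⟩ := hsubs
      have hc2 : S.ncard ≤ 2 := by
        rw [hcard]
        have e1 : S1.ncard ≤ 1 := by
          calc S1.ncard ≤ ({a0} : Set V1).ncard := Set.ncard_le_ncard hS1sub (Set.toFinite _)
            _ = 1 := Set.ncard_singleton _
        have e2 : S2.ncard ≤ 1 := by
          calc S2.ncard ≤ ({b0} : Set V2).ncard := Set.ncard_le_ncard hS2sub (Set.toFinite _)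
            _ = 1 := Set.ncard_singleton _
        omega
      by_cases hM2 : 2 ≤ M
      · omega
      · exfalso
        push_neg at hM2
        have ha1 : alphaNum G1 ≤ 1 := by
          have := le_max_left (alphaNum G1) (alphaNum G2)
          omega
        obtain ⟨c', hc'⟩ := Fintype.exists_ne_of_one_lt_card (by omega) a0
        have hc'S : Sum.inl c' ∉ S := fun h => hc' (hS1sub h)
        have hadj : G1.Adj a0 c' := by
          by_contra hna
          have hpair : ({a0, c'} : Set V1).Pairwise (fun a b => ¬ G1.Adj a b) := by
            simp only [Set.pairwise_insert, Set.pairwise_singleton]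
            refine ⟨trivial, fun b hb hne => ?_⟩
            simp only [Set.mem_singleton_iff] at hb
            subst hb
            exact ⟨hna, fun h => hna h.symm⟩
          have := spec1le _ hpair
          rw [Set.ncard_pair (fun h => hc' h.symm)] at this
          omega
        refine key _ hc'S _ (isCycle_triangle (joinAdj_inl_inl hadj.symm)
          (joinAdj_inl_inr a0 b0) (joinAdj_inr_inl b0 c')
          (by simp) (by simp [show a0 ≠ c' from fun h => hc' h.symm]) (by simp)) ?_
        intro x hx
        simp only [Walk.support_cons, Walk.support_nil, List.mem_cons,
          List.mem_singleton] at hx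
        rcases hx with rfl | rfl | rfl | rfl | h
        · exact Or.inr rfl
        · exact Or.inl ha0
        · exact Or.inl hb0
        · exact Or.inr rfl
        · exact absurd h List.not_mem_nil

end Main

theorem stmt_3 {V1 V2 : Type*} [Fintype V1] [Fintype V2]
    (G1 : SimpleGraph V1) (G2 : SimpleGraph V2)
    (h1 : 2 ≤ Fintype.card V1) (h2 : 2 ≤ Fintype.card V2) :
    conNum (joinGraph G1 G2) = max (alphaNum G1) (alphaNum G2) := by
  set M := max (alphaNum G1) (alphaNum G2) with hMdef
  have hmem : ∃ S : Set (V1 ⊕ V2), CycConvex (joinGraph G1 G2) S ∧ S ≠ Set.univ ∧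
      S.ncard = M := by
    rcases le_total (alphaNum G2) (alphaNum G1) with hle | hle
    · obtain ⟨S1, hS1, hc⟩ := (alpha_spec G1).1
      refine ⟨Sum.inl '' S1, indep_convex_inl S1 hS1, ?_, ?_⟩
      · obtain ⟨c⟩ : Nonempty V2 := Fintype.card_pos_iff.mp (by omega)
        intro h
        obtain ⟨a, -, ha⟩ := h ▸ Set.mem_univ (Sum.inr c : V1 ⊕ V2)
        exact Sum.inl_ne_inr ha
      · rw [Set.ncard_image_of_injective _ Sum.inl_injective, hc, hMdef, max_eq_left hle]
    · obtain ⟨S2, hS2, hc⟩ := (alpha_spec G2).1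
      refine ⟨Sum.inr '' S2, indep_convex_inr S2 hS2, ?_, ?_⟩
      · obtain ⟨c⟩ : Nonempty V1 := Fintype.card_pos_iff.mp (by omega)
        intro h
        obtain ⟨a, -, ha⟩ := h ▸ Set.mem_univ (Sum.inl c : V1 ⊕ V2)
        exact Sum.inr_ne_inl ha
      · rw [Set.ncard_image_of_injective _ Sum.inr_injective, hc, hMdef, max_eq_right hle]
  obtain ⟨S0, hS0conv, hS0ne, hS0card⟩ := hmem
  have hbdd : BddAbove {n | ∃ S : Set (V1 ⊕ V2),
      CycConvex (joinGraph G1 G2) S ∧ S ≠ Set.univ ∧ S.ncard = n} := by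
    refine ⟨M, ?_⟩
    rintro n ⟨S, hc, hne, rfl⟩
    exact convex_card_le h1 h2 S hc hne
  rw [conNum]
  apply le_antisymm
  · refine csSup_le ⟨M, S0, hS0conv, hS0ne, hS0card⟩ ?_
    rintro n ⟨S, hc, hne, rfl⟩
    exact convex_card_le h1 h2 S hc hne
  · exact le_csSup hbdd ⟨S0, hS0conv, hS0ne, hS0card⟩
end

section
/- In the cycle convexity, if G2 is a finite graph and c is the size of its smallest connected component, then the convexity number of the join of a single vertex v with G2 equals max(α(G2), |V(G2)| − c + 1). -/
open SimpleGraph Set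

variable {V : Type*}

/- In the join `v + G₂` every vertex of `G₂` is adjacent to the apex `v`, so every edge of `G₂`
spans a triangle with `v`. Hence a convex set avoiding `v` meets `G₂` in an independent set, and a
convex set containing `v` meets `G₂` in a union of connected components; conversely both kinds of
sets are convex, because every cycle through a vertex `u` has an edge avoiding `u` and two
distinct neighbours of `u`. A proper convex set of the second kind misses a whole component, so
it has at most `|V(G₂)| - c + 1` elements, and the complement of a smallest component together
with `v` attains this bound. -/

namespace SimpleGraph

lemma Walk.IsCycle.exists_adj_ne_start {W : Type*} {G : SimpleGraph W} {u : W} {w : G.Walk u u}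
    (hw : w.IsCycle) :
    ∃ a ∈ w.support, ∃ b ∈ w.support, a ≠ u ∧ b ≠ u ∧ G.Adj a b := by
  have hlen := hw.three_le_length
  refine ⟨w.getVert 1, w.getVert_mem_support 1, w.getVert 2, w.getVert_mem_support 2,
    ?_, ?_, w.adj_getVert_succ (by omega)⟩ <;>
  · rw [Ne, hw.getVert_endpoint_iff (by omega)]
    omega

lemma Walk.isCycle_triangle {W : Type*} {G : SimpleGraph W} {a b d : W}
    (hab : G.Adj a b) (hbd : G.Adj b d) (hda : G.Adj d a) :
    (Walk.cons hab (Walk.cons hbd (Walk.cons hda Walk.nil))).IsCycle := by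
  rw [Walk.cons_isCycle_iff]
  constructor
  · simp [Walk.isPath_def, hbd.ne, hda.ne, hab.ne']
  · simp only [Walk.edges_cons, Walk.edges_nil, List.mem_cons, Sym2.eq_iff, List.not_mem_nil]
    grind [hab.ne, hbd.ne, hda.ne]

section AdjClosed

variable {G : SimpleGraph V} {T : Set V}

lemma Reachable.mem_of_adj_closed (hT : ∀ ⦃a b⦄, G.Adj a b → a ∈ T → b ∈ T) {a b : V}
    (hab : G.Reachable a b) (ha : a ∈ T) : b ∈ T := by
  obtain ⟨w⟩ := hab
  induction w with
  | nil => exact ha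
  | cons h _ ih => exact ih (hT h ha)

lemma ncard_add_ncard_supp_le_of_adj_closed [Finite V]
    (hT : ∀ ⦃a b⦄, G.Adj a b → a ∈ T → b ∈ T) {x : V} (hx : x ∉ T) :
    T.ncard + (G.connectedComponentMk x).supp.ncard ≤ Nat.card V := by
  have hsub : T ⊆ (G.connectedComponentMk x).suppᶜ := fun y hy hyx =>
    hx (Reachable.mem_of_adj_closed hT (ConnectedComponent.exact hyx) hy)
  rw [← ncard_add_ncard_compl (G.connectedComponentMk x).supp, add_comm]
  exact Nat.add_le_add_left (ncard_le_ncard hsub) _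

lemma ConnectedComponent.compl_supp_adj_closed (K : G.ConnectedComponent) :
    ∀ ⦃a b⦄, G.Adj a b → a ∈ K.suppᶜ → b ∈ K.suppᶜ :=
  fun _ _ hab ha hb => ha ((K.mem_supp_congr_adj hab).mpr hb)

end AdjClosed

end SimpleGraph

open SimpleGraph

section CycleConvexity

variable {G : SimpleGraph V} {S : Set V}

lemma cycConvex_iff :
    CycConvex G S ↔
      ∀ u, (∃ w : G.Walk u u, w.IsCycle ∧ ∀ x ∈ w.support, x ∈ S ∪ {u}) → u ∈ S := by
  rw [CycConvex, cycInt, Set.union_eq_left]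
  rfl

lemma CycConvex.mem_of_adj_of_adj (hS : CycConvex G S) {u a b : V} (ha : a ∈ S) (hb : b ∈ S)
    (hua : G.Adj u a) (hab : G.Adj a b) (hbu : G.Adj b u) : u ∈ S := by
  refine cycConvex_iff.mp hS u ⟨_, Walk.isCycle_triangle hua hab hbu, ?_⟩
  simp [ha, hb]

lemma CycConvex.ncard_le_conNum [Finite V] (hS : CycConvex G S) (hne : S ≠ univ) :
    S.ncard ≤ conNum G :=
  le_csSup ⟨Nat.card V, by rintro _ ⟨T, -, -, rfl⟩; exact ncard_le_card T⟩ ⟨S, hS, hne, rfl⟩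

end CycleConvexity

lemma ncard_le_alphaNum [Finite V] {G : SimpleGraph V} {T : Set V}
    (hT : T.Pairwise fun a b => ¬ G.Adj a b) : T.ncard ≤ alphaNum G :=
  le_csSup ⟨Nat.card V, by rintro _ ⟨T, -, rfl⟩; exact ncard_le_card T⟩ ⟨T, hT, rfl⟩

section Join

variable {V1 V2 : Type*} {G1 : SimpleGraph V1} {G2 : SimpleGraph V2}

@[simp]
lemma joinGraph_adj_inr_inr {a b : V2} :
    (joinGraph G1 G2).Adj (.inr a) (.inr b) ↔ G2.Adj a b := by
  simp [joinGraph]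

@[simp]
lemma joinGraph_adj_inl_inr (a : V1) (b : V2) : (joinGraph G1 G2).Adj (.inl a) (.inr b) := by
  simp [joinGraph]

@[simp]
lemma joinGraph_adj_inr_inl (a : V2) (b : V1) : (joinGraph G1 G2).Adj (.inr a) (.inl b) := by
  simp [joinGraph]

lemma CycConvex.pairwise_not_adj_preimage_inr {S : Set (V1 ⊕ V2)}
    (hS : CycConvex (joinGraph G1 G2) S) {x : V1} (hx : .inl x ∉ S) :
    (Sum.inr ⁻¹' S).Pairwise fun a b => ¬ G2.Adj a b :=
  fun a ha b hb _ hab => hx (hS.mem_of_adj_of_adj ha hb (by simp) (by simpa) (by simp))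

lemma CycConvex.preimage_inr_adj_closed {S : Set (V1 ⊕ V2)}
    (hS : CycConvex (joinGraph G1 G2) S) {x : V1} (hx : .inl x ∈ S) :
    ∀ ⦃a b⦄, G2.Adj a b → a ∈ Sum.inr ⁻¹' S → b ∈ Sum.inr ⁻¹' S :=
  fun _ _ hab ha => hS.mem_of_adj_of_adj ha hx (by simpa using hab.symm) (by simp) (by simp)

lemma cycConvex_image_inr {T : Set V2} (hT : T.Pairwise fun a b => ¬ G2.Adj a b) :
    CycConvex (joinGraph G1 G2) (Sum.inr '' T) := by
  refine cycConvex_iff.mpr fun u ⟨w, hw, hsupp⟩ => ?_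
  obtain ⟨a, ha, b, hb, hau, hbu, hab⟩ := hw.exists_adj_ne_start
  obtain ⟨a, haT, rfl⟩ := (hsupp _ ha).resolve_right hau
  obtain ⟨b, hbT, rfl⟩ := (hsupp _ hb).resolve_right hbu
  rw [joinGraph_adj_inr_inr] at hab
  exact absurd hab (hT haT hbT (by rintro rfl; exact hab.ne rfl))

lemma cycConvex_insert_inl_image_inr {G1 : SimpleGraph Unit} {T : Set V2}
    (hT : ∀ ⦃a b⦄, G2.Adj a b → a ∈ T → b ∈ T) :
    CycConvex (joinGraph G1 G2) (insert (.inl ()) (Sum.inr '' T)) := by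
  refine cycConvex_iff.mpr fun u ⟨w, hw, hsupp⟩ => ?_
  rcases u with ⟨⟩ | x
  · exact mem_insert _ _
  -- The two neighbours of `u` on the cycle are distinct, so one of them is not the apex.
  obtain ⟨y, hy, hxy, hyv⟩ :
      ∃ y ∈ w.support, (joinGraph G1 G2).Adj (.inr x) y ∧ y ≠ .inl () := by
    by_cases hsnd : w.snd = .inl ()
    · exact ⟨_, w.getVert_mem_support _, (w.adj_penultimate hw.not_nil).symm,
        hsnd ▸ hw.snd_ne_penultimate.symm⟩
    · exact ⟨_, w.getVert_mem_support 1, w.adj_snd hw.not_nil, hsnd⟩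
  obtain rfl | ⟨t, ht, rfl⟩ := (hsupp y hy).resolve_right hxy.ne'
  · exact absurd rfl hyv
  · exact mem_insert_of_mem _ ⟨x, hT (by simpa using hxy.symm) ht, rfl⟩

end Join

lemma Set.ncard_preimage_inl_add_ncard_preimage_inr {α β : Type*} [Finite α] [Finite β]
    (s : Set (α ⊕ β)) : (Sum.inl ⁻¹' s).ncard + (Sum.inr ⁻¹' s).ncard = s.ncard := by
  conv_rhs => rw [← image_preimage_inl_union_image_preimage_inr s]
  rw [ncard_union_eq disjoint_image_inl_image_inr, ncard_image_of_injective _ Sum.inl_injective,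
    ncard_image_of_injective _ Sum.inr_injective]

section Cone

variable {V2 : Type*} [Finite V2] {G2 : SimpleGraph V2}

lemma alphaNum_le_conNum_joinGraph {V1 : Type*} [Finite V1] [Nonempty V1] (G1 : SimpleGraph V1) :
    alphaNum G2 ≤ conNum (joinGraph G1 G2) := by
  refine csSup_le' ?_
  rintro _ ⟨T, hT, rfl⟩
  obtain ⟨x⟩ := ‹Nonempty V1›
  have hne : Sum.inr '' T ≠ univ := (ne_univ_iff_exists_notMem _).mpr ⟨.inl x, by simp⟩
  simpa [ncard_image_of_injective _ Sum.inr_injective] using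
    (cycConvex_image_inr (G1 := G1) hT).ncard_le_conNum hne

lemma card_sub_ncard_supp_add_one_le_conNum (K : G2.ConnectedComponent) :
    Nat.card V2 - K.supp.ncard + 1 ≤ conNum (joinGraph (⊥ : SimpleGraph Unit) G2) := by
  obtain ⟨x, hx⟩ := K.nonempty_supp
  have hne : insert (.inl ()) (Sum.inr '' K.suppᶜ) ≠ univ :=
    (ne_univ_iff_exists_notMem _).mpr ⟨.inr x, by simpa using hx⟩
  have := (cycConvex_insert_inl_image_inr (G1 := ⊥) K.compl_supp_adj_closed).ncard_le_conNum hne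
  rwa [ncard_insert_of_notMem (by simp), ncard_image_of_injective _ Sum.inr_injective,
    ncard_compl] at this

lemma CycConvex.ncard_le_max {S : Set (Unit ⊕ V2)} {c : ℕ}
    (hc : ∀ K : G2.ConnectedComponent, c ≤ K.supp.ncard)
    (hS : CycConvex (joinGraph (⊥ : SimpleGraph Unit) G2) S) (hne : S ≠ univ) :
    S.ncard ≤ max (alphaNum G2) (Nat.card V2 - c + 1) := by
  rw [← ncard_preimage_inl_add_ncard_preimage_inr S]
  by_cases hv : .inl () ∈ S
  · obtain ⟨x, hx⟩ : ∃ x, Sum.inr x ∉ S := by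
      obtain ⟨(⟨⟩ | x), hy⟩ := ne_univ_iff_exists_notMem S |>.mp hne
      exacts [absurd hv hy, ⟨x, hy⟩]
    have hT := ncard_add_ncard_supp_le_of_adj_closed (hS.preimage_inr_adj_closed hv) hx
    have hK := hc (G2.connectedComponentMk x)
    have hv1 : (Sum.inl ⁻¹' S : Set Unit).ncard ≤ 1 := by
      simpa using ncard_le_card (Sum.inl ⁻¹' S : Set Unit)
    omega
  · have hv0 : (Sum.inl ⁻¹' S : Set Unit) = ∅ := eq_empty_of_forall_notMem fun _ => hv
    rw [hv0, ncard_empty, zero_add]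
    exact (ncard_le_alphaNum (hS.pairwise_not_adj_preimage_inr hv)).trans (le_max_left _ _)

end Cone

theorem stmt_4_general {V2 : Type*} [Fintype V2] (G2 : SimpleGraph V2) (c : ℕ)
    (hc : IsLeast {n | ∃ K : G2.ConnectedComponent, n = K.supp.ncard} c) :
    conNum (joinGraph (⊥ : SimpleGraph Unit) G2) =
      max (alphaNum G2) (Fintype.card V2 - c + 1) := by
  obtain ⟨K, rfl⟩ := hc.1
  rw [← Nat.card_eq_fintype_card]
  refine le_antisymm (csSup_le' ?_)
    (max_le (alphaNum_le_conNum_joinGraph ⊥) (card_sub_ncard_supp_add_one_le_conNum K))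
  rintro _ ⟨S, hS, hne, rfl⟩
  exact hS.ncard_le_max (fun K' => hc.2 ⟨K', rfl⟩) hne

theorem stmt_4 {V2 : Type*} [Fintype V2] [Nonempty V2] (G2 : SimpleGraph V2) (c : ℕ)
    (hc : IsLeast {n | ∃ K : G2.ConnectedComponent, n = K.supp.ncard} c) :
    conNum (joinGraph (⊥ : SimpleGraph Unit) G2) =
      max (alphaNum G2) (Fintype.card V2 - c + 1) :=
  stmt_4_general G2 c hc
end

section
/- In the cycle convexity, if G is an (S,C,R)-pseudo-split graph with minimum degree at least 2, then the convexity number of G equals α(G[R]) + |S|. -/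
open SimpleGraph Set

variable {V : Type*}

set_option maxHeartbeats 1000000

lemma triangle_isCycle {G : SimpleGraph V} {a b c : V} (hab : G.Adj a b) (hbc : G.Adj b c)
    (hca : G.Adj c a) (hac : a ≠ c) :
    ((Walk.cons hab (Walk.cons hbc (Walk.cons hca Walk.nil))) : G.Walk a a).IsCycle := by
  simp [Walk.isCycle_def, Walk.isTrail_def, hab.ne, hbc.ne, hca.ne, hac, Sym2.eq, Sym2.rel_iff,
    hab.ne', hbc.ne', hca.ne', hac.symm]

lemma mem_cycInt_triangle {G : SimpleGraph V} {T : Set V} {a b c : V} (hb : b ∈ T) (hc : c ∈ T)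
    (hab : G.Adj a b) (hbc : G.Adj b c) (hca : G.Adj c a) : a ∈ cycInt G T := by
  right
  refine ⟨Walk.cons hab (Walk.cons hbc (Walk.cons hca Walk.nil)),
    triangle_isCycle hab hbc hca hca.ne', ?_⟩
  intro x hx
  simp only [Walk.support_cons, Walk.support_nil, List.mem_cons, List.mem_singleton] at hx
  rcases hx with rfl | rfl | rfl | rfl | h
  · right; rfl
  · left; exact hb
  · left; exact hc
  · right; rfl
  · exact absurd h List.not_mem_nil

lemma cycConvex_of_no_edges {G : SimpleGraph V} {T : Set V}
    (h : ∀ x ∈ T, ∀ y ∈ T, ¬ G.Adj x y) : CycConvex G T := by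
  unfold CycConvex cycInt
  refine Set.union_eq_self_of_subset_right ?_
  rintro u ⟨w, hw, hsupp⟩
  exfalso
  cases w with
  | nil => exact hw.ne_nil rfl
  | @cons _ b _ h1 p =>
    cases p with
    | nil => simpa using hw.three_le_length
    | @cons _ c _ h2 q =>
      have hlen := hw.three_le_length
      simp only [Walk.length_cons] at hlen
      have hq : q.length ≠ 0 := by omega
      have hbu : b ≠ u := h1.ne'
      have hnd := hw.2
      simp only [Walk.support_cons, List.tail_cons, List.nodup_cons] at hnd
      have hqnd : q.support.Nodup := hnd.2
      have hcu : c ≠ u := by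
        rintro rfl
        have : q = Walk.nil := Walk.isPath_iff_eq_nil.mp (by rw [Walk.isPath_def]; exact hqnd)
        rw [this] at hq; simp at hq
      have hbT : b ∈ T := by
        rcases hsupp b (by simp) with hb | hb
        · exact hb
        · exact absurd hb hbu
      have hcT : c ∈ T := by
        rcases hsupp c (by simp) with hc | hc
        · exact hc
        · exact absurd hc hcu
      exact h b hbT c hcT h2


theorem stmt_5 {V : Type*} [Fintype V] (G : SimpleGraph V) (S C R : Set V)
    (hSC : Disjoint S C) (hSR : Disjoint S R) (hCR : Disjoint C R)
    (hcover : S ∪ C ∪ R = Set.univ)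
    (hS2 : 2 ≤ S.ncard) (hC2 : 2 ≤ C.ncard)
    (hSindep : S.Pairwise fun a b => ¬ G.Adj a b)
    (hCclique : C.Pairwise fun a b => G.Adj a b)
    (hSR' : ∀ s ∈ S, ∀ r ∈ R, ¬ G.Adj s r)
    (hCR' : ∀ c ∈ C, ∀ r ∈ R, G.Adj c r)
    (hCS : ∀ c ∈ C, ∃ s ∈ S, G.Adj c s)
    (hSC' : ∀ s ∈ S, ∃ c ∈ C, ¬ G.Adj s c)
    (hdeg : ∀ v : V, 2 ≤ (G.neighborSet v).ncard) :
    conNum G = alphaNum (SimpleGraph.induce R G) + S.ncard := by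
  classical
  have hαsne : {n | ∃ A : Set ↥R,
      A.Pairwise (fun a b => ¬ (SimpleGraph.induce R G).Adj a b) ∧ A.ncard = n}.Nonempty :=
    ⟨0, ∅, by simp, by simp⟩
  have hαsbdd : BddAbove {n | ∃ A : Set ↥R,
      A.Pairwise (fun a b => ¬ (SimpleGraph.induce R G).Adj a b) ∧ A.ncard = n} := by
    refine ⟨(Set.univ : Set ↥R).ncard, ?_⟩
    rintro n ⟨A, _, rfl⟩
    exact Set.ncard_le_ncard (Set.subset_univ A) (Set.toFinite _)
  -- a maximum independent set of the induced graph
  obtain ⟨A, hAindep, hAcard⟩ : alphaNum (SimpleGraph.induce R G) ∈ {n | ∃ A : Set ↥R,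
      A.Pairwise (fun a b => ¬ (SimpleGraph.induce R G).Adj a b) ∧ A.ncard = n} := by
    unfold alphaNum; exact Nat.sSup_mem hαsne hαsbdd
  have hCne : C.Nonempty := (Set.ncard_pos (C.toFinite)).mp (by omega)
  -- every neighbor of a vertex of S lies in C
  have hnbrS : ∀ s ∈ S, ∀ x, G.Adj s x → x ∈ C := by
    intro s hs x hadj
    have hx : x ∈ S ∪ C ∪ R := hcover ▸ Set.mem_univ x
    rcases hx with (hx | hx) | hx
    · rcases eq_or_ne s x with rfl | hne
      · exact absurd hadj (G.irrefl)
      · exact absurd hadj (hSindep hs hx hne)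
    · exact hx
    · exact absurd hadj (hSR' s hs x hx)
  have htwo : ∀ v : V, ∃ x y, G.Adj v x ∧ G.Adj v y ∧ x ≠ y := by
    intro v
    have h1 : 1 < (G.neighborSet v).ncard := by have := hdeg v; omega
    obtain ⟨x, y, hx, hy, hxy⟩ := (Set.one_lt_ncard_iff (Set.toFinite _)).mp h1
    exact ⟨x, y, hx, hy, hxy⟩
  -- the upper bound
  have hub : ∀ T : Set V, CycConvex G T → T ≠ Set.univ → T.ncard ≤ alphaNum (SimpleGraph.induce R G) + S.ncard := by
    intro T hconv hne
    have claim1 : ∀ c1 ∈ T ∩ C, ∀ c2 ∈ T ∩ C, c1 = c2 := by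
      by_contra hcon
      push_neg at hcon
      obtain ⟨c1, hc1, c2, hc2, h12⟩ := hcon
      apply hne
      have hCT : C ⊆ T := by
        intro x hx
        rcases eq_or_ne x c1 with rfl | hx1
        · exact hc1.1
        rcases eq_or_ne x c2 with rfl | hx2
        · exact hc2.1
        have := mem_cycInt_triangle hc1.1 hc2.1 (hCclique hx hc1.2 hx1)
          (hCclique hc1.2 hc2.2 h12) (hCclique hc2.2 hx hx2.symm)
        rwa [hconv] at this
      ext v
      simp only [Set.mem_univ, iff_true]
      have hv : v ∈ S ∪ C ∪ R := hcover ▸ Set.mem_univ v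
      rcases hv with (hv | hv) | hv
      · obtain ⟨x, y, hx, hy, hxy⟩ := htwo v
        have hxC : x ∈ C := hnbrS v hv x hx
        have hyC : y ∈ C := hnbrS v hv y hy
        have := mem_cycInt_triangle (hCT hxC) (hCT hyC) hx (hCclique hxC hyC hxy) hy.symm
        rwa [hconv] at this
      · exact hCT hv
      · have := mem_cycInt_triangle hc1.1 hc2.1 ((hCR' c1 hc1.2 v hv).symm)
          (hCclique hc1.2 hc2.2 h12) (hCR' c2 hc2.2 v hv)
        rwa [hconv] at this
    have claim2 : ∀ c ∈ T ∩ C, ∀ r ∈ T ∩ R, False := by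
      intro c hc r hr
      obtain ⟨c', hc', hcc'⟩ := Set.exists_ne_of_one_lt_ncard (by omega : 1 < C.ncard) c
      have hmem := mem_cycInt_triangle hc.1 hr.1 (hCclique hc' hc.2 hcc')
        (hCR' c hc.2 r hr.2) ((hCR' c' hc' r hr.2).symm)
      rw [hconv] at hmem
      exact hcc' (claim1 c' ⟨hmem, hc'⟩ c hc)
    have claim3 : ∀ c ∈ T ∩ C, ¬ (S ⊆ T) := by
      intro c hc hST
      obtain ⟨s, hs, hcs⟩ := hCS c hc.2
      obtain ⟨x, y, hx, hy, hxy⟩ := htwo s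
      have hxc : ∃ c', G.Adj s c' ∧ c' ≠ c := by
        rcases eq_or_ne x c with rfl | hxc
        · exact ⟨y, hy, fun h => hxy h.symm⟩
        · exact ⟨x, hx, hxc⟩
      obtain ⟨c', hsc', hc'c⟩ := hxc
      have hc'C : c' ∈ C := hnbrS s hs c' hsc'
      have hmem := mem_cycInt_triangle hc.1 (hST hs) (hCclique hc'C hc.2 hc'c) hcs hsc'
      rw [hconv] at hmem
      exact hc'c (claim1 c' ⟨hmem, hc'C⟩ c hc)
    have claim4 : (T ∩ R).Pairwise (fun a b => ¬ G.Adj a b) := by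
      intro r1 hr1 r2 hr2 hne12 hadj
      obtain ⟨c, hcC⟩ := hCne
      have := mem_cycInt_triangle hr1.1 hr2.1 (hCR' c hcC r1 hr1.2) hadj
        ((hCR' c hcC r2 hr2.2).symm)
      rw [hconv] at this
      exact claim2 c ⟨this, hcC⟩ r1 hr1
    -- cardinality estimates
    have hTdecomp : T = (T ∩ S) ∪ (T ∩ C) ∪ (T ∩ R) := by
      rw [← Set.inter_union_distrib_left, ← Set.inter_union_distrib_left, hcover,
        Set.inter_univ]
    have hcard : T.ncard ≤ (T ∩ S).ncard + (T ∩ C).ncard + (T ∩ R).ncard := by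
      calc T.ncard = ((T ∩ S) ∪ (T ∩ C) ∪ (T ∩ R)).ncard := by rw [← hTdecomp]
        _ ≤ ((T ∩ S) ∪ (T ∩ C)).ncard + (T ∩ R).ncard :=
            Set.ncard_union_le _ _
        _ ≤ (T ∩ S).ncard + (T ∩ C).ncard + (T ∩ R).ncard :=
            Nat.add_le_add_right (Set.ncard_union_le _ _) _
    have hTS : (T ∩ S).ncard ≤ S.ncard :=
      Set.ncard_le_ncard Set.inter_subset_right (S.toFinite)
    have hTR : (T ∩ R).ncard ≤ alphaNum (SimpleGraph.induce R G) := by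
      set B := T ∩ R with hB
      have hBsub : B ⊆ R := Set.inter_subset_right
      have himg : Subtype.val '' ((Subtype.val ⁻¹' B) : Set ↥R) = B := by
        rw [Set.image_preimage_eq_inter_range, Subtype.range_coe]
        exact Set.inter_eq_self_of_subset_left hBsub
      have hAcard' : ((Subtype.val ⁻¹' B) : Set ↥R).ncard = B.ncard := by
        conv_rhs => rw [← himg]
        rw [Set.ncard_image_of_injective _ Subtype.val_injective]
      have hAindep' : ((Subtype.val ⁻¹' B) : Set ↥R).Pairwise
          (fun a b => ¬ (SimpleGraph.induce R G).Adj a b) := by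
        intro a ha b hb hab hadj
        exact claim4 ha hb (fun h => hab (Subtype.val_injective h)) hadj
      unfold alphaNum
      exact le_csSup hαsbdd ⟨Subtype.val ⁻¹' B, hAindep', hAcard'⟩
    rcases Set.eq_empty_or_nonempty (T ∩ C) with hTC | ⟨c, hc⟩
    · have h0 : (T ∩ C).ncard = 0 := by rw [hTC]; simp
      omega
    · have hTCone : (T ∩ C).ncard ≤ 1 :=
        (Set.ncard_le_one (Set.toFinite _)).mpr claim1
      have hTRempty : (T ∩ R).ncard = 0 := by
        rcases Set.eq_empty_or_nonempty (T ∩ R) with h | ⟨r, hr⟩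
        · rw [h]; simp
        · exact absurd (claim2 c hc r hr) not_false
      rcases Set.eq_empty_or_nonempty R with hR | ⟨r, hr⟩
      · have hSnotsub : ¬ S ⊆ T := claim3 c hc
        have hss : T ∩ S ⊂ S :=
          ⟨Set.inter_subset_right, fun h => hSnotsub (fun x hx => (h hx).1)⟩
        have : (T ∩ S).ncard < S.ncard := Set.ncard_lt_ncard hss (S.toFinite)
        omega
      · have hα1 : 1 ≤ alphaNum (SimpleGraph.induce R G) := by
          unfold alphaNum
          exact le_csSup hαsbdd ⟨{⟨r, hr⟩}, Set.pairwise_singleton _ _, Set.ncard_singleton _⟩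
        omega
  -- the witness convex set
  set A' : Set V := Subtype.val '' A with hA'
  have hA'R : A' ⊆ R := by rintro x ⟨a, _, rfl⟩; exact a.2
  have hA'card : A'.ncard = alphaNum (SimpleGraph.induce R G) := by
    rw [hA', Set.ncard_image_of_injective _ Subtype.val_injective, hAcard]
  have hA'indep : A'.Pairwise (fun a b => ¬ G.Adj a b) := by
    rintro x ⟨a, ha, rfl⟩ y ⟨b, hb, rfl⟩ hxy hadj
    have hab : a ≠ b := fun h => hxy (by rw [h])
    exact hAindep ha hb hab (by simpa [comap_adj] using hadj)
  set T₀ : Set V := S ∪ A' with hT₀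
  have hT₀noedge : ∀ x ∈ T₀, ∀ y ∈ T₀, ¬ G.Adj x y := by
    rintro x (hx | hx) y (hy | hy) hadj
    · rcases eq_or_ne x y with rfl | hne
      · exact G.irrefl hadj
      · exact hSindep hx hy hne hadj
    · exact hSR' x hx y (hA'R hy) hadj
    · exact hSR' y hy x (hA'R hx) hadj.symm
    · rcases eq_or_ne x y with rfl | hne
      · exact G.irrefl hadj
      · exact hA'indep hx hy hne hadj
  have hT₀conv : CycConvex G T₀ := cycConvex_of_no_edges hT₀noedge
  have hT₀ne : T₀ ≠ Set.univ := by
    obtain ⟨c, hcC⟩ := hCne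
    intro h
    have : c ∈ T₀ := h ▸ Set.mem_univ c
    rcases this with h' | h'
    · exact (hSC.ne_of_mem h' hcC) rfl
    · exact (hCR.ne_of_mem hcC (hA'R h')) rfl
  have hT₀card : T₀.ncard = alphaNum (SimpleGraph.induce R G) + S.ncard := by
    rw [hT₀, Set.ncard_union_eq (Set.disjoint_of_subset_right hA'R hSR)
      (S.toFinite) (A'.toFinite), hA'card]
    omega
  have hmem : alphaNum (SimpleGraph.induce R G) + S.ncard ∈ {n | ∃ T : Set V, CycConvex G T ∧ T ≠ Set.univ ∧ T.ncard = n} :=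
    ⟨T₀, hT₀conv, hT₀ne, hT₀card⟩
  have hbdd : ∀ n ∈ {n | ∃ T : Set V, CycConvex G T ∧ T ≠ Set.univ ∧ T.ncard = n},
      n ≤ alphaNum (SimpleGraph.induce R G) + S.ncard := by
    rintro n ⟨T, hconv, hne, rfl⟩
    exact hub T hconv hne
  refine le_antisymm (csSup_le ⟨alphaNum (SimpleGraph.induce R G) + S.ncard, hmem⟩ hbdd) (le_csSup ⟨alphaNum (SimpleGraph.induce R G) + S.ncard, hbdd⟩ hmem)
end

section
/- Let G be a graph containing neighbors v, w such that there is an induced cycle C containing the edge vw and a cycle C' containing w but not v with v having at most one neighbor in V(C') \ {w}. Then there exists a set S ⊆ V(G) with I^2(S) \ I(S) ≠ ∅ in the cycle convexity. -/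
open SimpleGraph Set

variable {V : Type*}

namespace CycAux

variable {G : SimpleGraph V}
open SimpleGraph.Walk

-- (aux lemmas assumed, pasted in final file)
lemma getElem?_support {u v : V} (p : G.Walk u v) : ∀ (i : ℕ), i ≤ p.length →
    p.support[i]? = some (p.getVert i) := by
  induction p with
  | nil =>
    intro i hi
    obtain rfl : i = 0 := Nat.le_zero.mp hi
    simp
  | cons h q ih =>
    intro i hi
    cases i with
    | zero => simp
    | succ n =>
      simp only [support_cons, getVert_cons_succ, List.getElem?_cons_succ]
      exact ih n (by simpa [Nat.succ_le_succ_iff] using hi)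

lemma cycle_getVert_inj {u : V} {p : G.Walk u u} (hp : p.IsCycle) {i j : ℕ}
    (hi1 : 1 ≤ i) (hi2 : i ≤ p.length) (hj1 : 1 ≤ j) (hj2 : j ≤ p.length)
    (h : p.getVert i = p.getVert j) : i = j := by
  have hlen : p.support.length = p.length + 1 := p.length_support
  have htl : p.support.tail.length = p.length := by
    rw [List.length_tail, hlen]; omega
  have hi' : p.support.tail[i-1]? = some (p.getVert i) := by
    rw [List.getElem?_tail, Nat.sub_add_cancel hi1, getElem?_support p i hi2]
  have hj' : p.support.tail[j-1]? = some (p.getVert j) := by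
    rw [List.getElem?_tail, Nat.sub_add_cancel hj1, getElem?_support p j hj2]
  have : i - 1 = j - 1 := by
    refine (List.getElem?_inj (i := i-1) (by omega) hp.support_nodup).mp ?_
    rw [hi', hj', h]
  omega

lemma cycle_adj_eq {u y : V} {p : G.Walk u u} (hp : p.IsCycle)
    (hadj : p.toSubgraph.Adj u y) : y = p.getVert 1 ∨ y = p.getVert (p.length - 1) := by
  have h3 : 3 ≤ p.length := hp.three_le_length
  rw [toSubgraph_adj_iff] at hadj
  obtain ⟨i, heq, hlt⟩ := hadj
  rw [Sym2.eq_iff] at heq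
  rcases heq with ⟨h1, h2⟩ | ⟨h1, h2⟩
  · rcases Nat.eq_zero_or_pos i with rfl | hpos
    · left; exact h2.symm
    · exfalso
      have : i = p.length := cycle_getVert_inj hp hpos (le_of_lt hlt) (by omega) le_rfl
        (by rw [h1, p.getVert_length])
      omega
  · right
    have : i + 1 = p.length := cycle_getVert_inj hp (by omega) (by omega) (by omega) le_rfl
      (by rw [h2, p.getVert_length])
    rw [← h1]; congr 1; omega

lemma cycle_two_nbrs {u : V} {p : G.Walk u u} (hp : p.IsCycle) :
    G.Adj u (p.getVert 1) ∧ G.Adj u (p.getVert (p.length - 1)) ∧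
    p.getVert 1 ≠ p.getVert (p.length - 1) ∧
    p.getVert 1 ∈ p.support ∧ p.getVert (p.length - 1) ∈ p.support := by
  have h3 : 3 ≤ p.length := hp.three_le_length
  refine ⟨p.adj_snd hp.not_nil, ?_, ?_, ?_, ?_⟩
  · have := p.adj_getVert_succ (i := p.length - 1) (by omega)
    have he : p.length - 1 + 1 = p.length := by omega
    rw [he, p.getVert_length] at this
    exact this.symm
  · intro h
    have : (1 : ℕ) = p.length - 1 := cycle_getVert_inj hp le_rfl (by omega) (by omega)
      (by omega) h
    omega
  · exact mem_support_iff_exists_getVert.mpr ⟨1, rfl, by omega⟩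
  · exact mem_support_iff_exists_getVert.mpr ⟨p.length - 1, rfl, by omega⟩

lemma splice_isCycle {v w x : V} (hvw : G.Adj v w) (hxv : G.Adj x v) (hwx : w ≠ x)
    {P : G.Walk w x} (hP : P.IsPath) (hvP : v ∉ P.support) :
    (Walk.cons hvw (P.concat hxv)).IsCycle := by
  rw [cons_isCycle_iff]
  constructor
  · rw [isPath_def, support_concat]
    rw [List.nodup_append]
    exact ⟨hP.support_nodup, List.nodup_singleton v, fun a ha b hb => by
      rw [List.mem_singleton] at hb; subst hb; exact fun h => hvP (h ▸ ha)⟩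
  · rw [edges_concat]
    intro hmem
    rcases (by simpa using hmem : s(v,w) ∈ P.edges ∨ s(v,w) = s(x,v)) with hmem | hmem
    · exact hvP (P.fst_mem_support_of_mem_edges hmem)
    · rw [Sym2.eq_iff] at hmem
      rcases hmem with ⟨rfl, h2⟩ | ⟨h1, rfl⟩
      · exact hvw.ne h2.symm
      · exact hwx rfl

end CycAux

theorem stmt_12 {V : Type*} [Fintype V] (G : SimpleGraph V) (v w : V)
    (hvw : G.Adj v w)
    (c : G.Walk v v) (hc : c.IsCycle)
    (hcind : ∀ x ∈ c.support, ∀ y ∈ c.support, G.Adj x y → c.toSubgraph.Adj x y)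
    (hce : s(v, w) ∈ c.edges)
    (c' : G.Walk w w) (hc' : c'.IsCycle) (hv : v ∉ c'.support)
    (hnb : {x | x ∈ c'.support ∧ x ≠ w ∧ G.Adj v x}.Subsingleton) :
    ∃ S : Set V, ((cycInt G)^[2] S \ (cycInt G)^[1] S).Nonempty := by
  classical
  have hit : ∀ S : Set V, (cycInt G)^[2] S = cycInt G (cycInt G S) := by
    intro S
    rfl
  -- If `v` has at most one neighbour in `S`, then `v ∉ cycInt G S`.
  have key : ∀ S : Set V, {y | y ∈ S ∧ G.Adj v y}.Subsingleton → v ∉ S → v ∉ cycInt G S := by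
    intro S hsub hvS hmem
    rcases hmem with h | hmem
    · exact hvS h
    · obtain ⟨W, hW, hsup⟩ := hmem
      obtain ⟨ha1, ha2, hne, hm1, hm2⟩ := CycAux.cycle_two_nbrs hW
      have h1 : W.getVert 1 ∈ S := by
        rcases hsup _ hm1 with h | h
        · exact h
        · exact absurd h ha1.ne'
      have h2 : W.getVert (W.length - 1) ∈ S := by
        rcases hsup _ hm2 with h | h
        · exact h
        · exact absurd h ha2.ne'
      exact hne (hsub ⟨h1, ha1⟩ ⟨h2, ha2⟩)
  by_cases hcase : ∃ x, x ∈ c'.support ∧ x ≠ w ∧ G.Adj v x ∧ x ∉ c.support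
  · -- Case B : `v` has a neighbour on `c'` outside `c`.
    obtain ⟨x, hxB, hxw, hvx, hxA⟩ := hcase
    set S : Set V := {y | (y ∈ c.support ∨ y ∈ c'.support) ∧ y ≠ v ∧ y ≠ w ∧
      ¬(G.Adj v y ∧ y ∈ c.support)} with hS
    have hBS : ∀ y, y ∈ c'.support → y ≠ w → y ∈ S := by
      intro y hyB hyw
      refine ⟨Or.inr hyB, fun h => hv (h ▸ hyB), hyw, ?_⟩
      rintro ⟨hadj, hyA⟩
      have : y = x := hnb ⟨hyB, hyw, hadj⟩ ⟨hxB, hxw, hvx⟩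
      exact hxA (this ▸ hyA)
    have hwI : w ∈ cycInt G S := by
      refine Or.inr ⟨c', hc', fun y hy => ?_⟩
      by_cases hyw : y = w
      · exact Or.inr hyw
      · exact Or.inl (hBS y hy hyw)
    have hv1 : v ∉ (cycInt G)^[1] S := by
      rw [Function.iterate_one]
      refine key S ?_ ?_
      · rintro a ⟨haS, haadj⟩ b ⟨hbS, hbadj⟩
        have ha' : a ∈ {z | z ∈ c'.support ∧ z ≠ w ∧ G.Adj v z} := by
          rcases haS.1 with h | h
          · exact absurd ⟨haadj, h⟩ haS.2.2.2
          · exact ⟨h, haS.2.2.1, haadj⟩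
        have hb' : b ∈ {z | z ∈ c'.support ∧ z ≠ w ∧ G.Adj v z} := by
          rcases hbS.1 with h | h
          · exact absurd ⟨hbadj, h⟩ hbS.2.2.2
          · exact ⟨h, hbS.2.2.1, hbadj⟩
        exact hnb ha' hb'
      · rintro ⟨-, h, -⟩
        exact h rfl
    refine ⟨S, v, ?_, hv1⟩
    rw [hit]
    set P := (c'.takeUntil x hxB).bypass with hPdef
    have hPp : P.IsPath := Walk.bypass_isPath _
    have hPsub : ∀ y ∈ P.support, y ∈ c'.support := fun y hy =>
      (c'.support_takeUntil_subset hxB) ((Walk.support_bypass_subset _) hy)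
    have hvP : v ∉ P.support := fun h => hv (hPsub _ h)
    have hW := CycAux.splice_isCycle hvw hvx.symm (fun h => hxw h.symm) hPp hvP
    refine Or.inr ⟨Walk.cons hvw (P.concat hvx.symm), hW, ?_⟩
    intro y hy
    rw [Walk.support_cons] at hy
    rcases List.mem_cons.mp hy with rfl | hy
    · exact Or.inr rfl
    · rw [Walk.support_concat] at hy
      rcases (by simpa using hy : y ∈ P.support ∨ y = v) with hy | rfl
      · by_cases hyw : y = w
        · exact Or.inl (hyw ▸ hwI)
        · exact Or.inl (Or.inl (hBS y (hPsub y hy) hyw))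
      · exact Or.inr rfl
  · -- Case A : every neighbour of `v` on `c'` other than `w` lies on `c`.
    push_neg at hcase
    set S : Set V := {y | (y ∈ c.support ∨ y ∈ c'.support) ∧ y ≠ v ∧ y ≠ w} with hS
    have hBS : ∀ y, y ∈ c'.support → y ≠ w → y ∈ S := fun y hyB hyw =>
      ⟨Or.inr hyB, fun h => hv (h ▸ hyB), hyw⟩
    have hwI : w ∈ cycInt G S := by
      refine Or.inr ⟨c', hc', fun y hy => ?_⟩
      by_cases hyw : y = w
      · exact Or.inr hyw
      · exact Or.inl (hBS y hy hyw)
    have hwpos : w = c.getVert 1 ∨ w = c.getVert (c.length - 1) :=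
      CycAux.cycle_adj_eq hc (hcind v c.start_mem_support w (c.snd_mem_support_of_mem_edges hce) hvw)
    have hyA : ∀ y, y ∈ S → G.Adj v y → (y = c.getVert 1 ∨ y = c.getVert (c.length - 1)) := by
      intro y hyS hadj
      have hyAmem : y ∈ c.support := by
        rcases hyS.1 with h | h
        · exact h
        · exact hcase y h hyS.2.2 hadj
      exact CycAux.cycle_adj_eq hc (hcind v c.start_mem_support y hyAmem hadj)
    have hsub : {y | y ∈ S ∧ G.Adj v y}.Subsingleton := by
      rintro a ⟨haS, haadj⟩ b ⟨hbS, hbadj⟩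
      have haw := haS.2.2
      have hbw := hbS.2.2
      rcases hyA a haS haadj with h1 | h1 <;> rcases hyA b hbS hbadj with h2 | h2
      · rw [h1, h2]
      · exfalso
        rcases hwpos with h3 | h3
        · exact haw (h1.trans h3.symm)
        · exact hbw (h2.trans h3.symm)
      · exfalso
        rcases hwpos with h3 | h3
        · exact hbw (h2.trans h3.symm)
        · exact haw (h1.trans h3.symm)
      · rw [h1, h2]
    have hv1 : v ∉ (cycInt G)^[1] S := by
      rw [Function.iterate_one]
      exact key S hsub (fun h => h.2.1 rfl)
    refine ⟨S, v, ?_, hv1⟩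
    rw [hit]
    refine Or.inr ⟨c, hc, fun y hy => ?_⟩
    by_cases hyv : y = v
    · exact Or.inr hyv
    · by_cases hyw : y = w
      · exact Or.inl (hyw ▸ hwI)
      · exact Or.inl (Or.inl ⟨Or.inl hy, hyv, hyw⟩)
end

section
/- Let G be a finite graph and suppose there exist a vertex v' and a set S with v' ∈ I^2(S) \ I(S) in the cycle convexity. Then there exist adjacent vertices v, w in G, an induced cycle C containing the edge vw, and a cycle C' containing w but not v such that v has at most one neighbor in V(C') \ {w}. -/
open SimpleGraph Set

variable {V : Type*}

/-!
Put `T = I(S)`. Since `v' ∈ I(T) \ T`, some cycle through `v'` lies in `T ∪ {v'}`, and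
shortcutting it along chords yields a chordless such cycle `D`. Not every vertex of `D` other
than `v'` lies in `S`, so walking along `D` from `v'` we meet a first vertex `b` that closes a
cycle `C` with `S`, i.e. `C` lies in `S ∪ {b}`. Let `v` be the vertex of this walk just before it
first enters `C`, and `w` the vertex of `C` it enters, or `w = b` when `v` is adjacent to `b`.
As `v` comes before `b`, it closes no cycle with `S`. Hence `v` has at most one neighbour on
`C - b`: the arc of `C - b` between two such neighbours would close a cycle through `v` inside
`S ∪ {v}`.
-/

namespace SimpleGraph.Walk

variable {G : SimpleGraph V} {a u v w x y : V}

theorem IsPath.exists_isCycle_of_adj {p : G.Walk u v} (hp : p.IsPath) (h : G.Adj v u)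
    (he : s(v, u) ∉ p.edges) (ha : a ∈ p.support) :
    ∃ c : G.Walk a a, c.IsCycle ∧ c.support ⊆ p.support ∧ c.length = p.length + 1 := by
  classical
  have hc : (cons h p).IsCycle := (cons_isCycle_iff p h).mpr ⟨hp, he⟩
  have ha' : a ∈ (cons h p).support := List.mem_cons_of_mem _ ha
  refine ⟨_, hc.rotate ha', fun z hz => ?_, by simp⟩
  rcases List.mem_cons.mp ((mem_support_rotate_iff ..).mp hz) with rfl | hz
  exacts [p.end_mem_support, hz]

theorem IsCycle.exists_length_lt_of_not_isChordless {c : G.Walk a a} (hc : c.IsCycle)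
    (hch : ¬ c.IsChordless) :
    ∃ c' : G.Walk a a, c'.IsCycle ∧ c'.support ⊆ c.support ∧ c'.length < c.length := by
  classical
  obtain ⟨x, y, hx, hy, hxy, he⟩ : ∃ x y, x ∈ c.support ∧ y ∈ c.support ∧ G.Adj x y ∧
      s(x, y) ∉ c.edges := by
    simpa [isChordless_iff_forall_mem_edges] using hch
  -- Rotate `c` to start at `x` and cut it at `y`; the chord closes each arc into a cycle.
  set r := c.rotate x hx
  have hr : r.IsCycle := hc.rotate hx
  have hyr : y ∈ r.support := (mem_support_rotate_iff ..).mpr hy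
  have hrc : r.support ⊆ c.support := fun _ => (mem_support_rotate_iff ..).mp
  have her : ∀ {e}, e ∈ r.edges → e ∈ c.edges := (c.rotate_edges x hx).mem_iff.mp
  set p₁ := r.takeUntil y hyr
  set p₂ := r.dropUntil y hyr
  have hsplit : p₁.append p₂ = r := take_spec r hyr
  have hp₁ : p₁.IsPath := hr.isPath_takeUntil hyr
  have hp₂ : p₂.IsPath := (hsplit ▸ hr).isPath_of_append_right (not_nil_of_ne hxy.ne)
  have he₁ : s(y, x) ∉ p₁.edges := fun h =>
    he (her (edges_takeUntil_subset_edges r hyr (Sym2.eq_swap ▸ h)))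
  have he₂ : s(x, y) ∉ p₂.edges := fun h => he (her (edges_dropUntil_subset_edges r hyr h))
  have hlen : p₁.length + p₂.length = c.length := by
    rw [← length_append, hsplit, length_rotate]
  have hl₁ := ((cons_isCycle_iff p₁ hxy.symm).mpr ⟨hp₁, he₁⟩).three_le_length
  have hl₂ := ((cons_isCycle_iff p₂ hxy).mpr ⟨hp₂, he₂⟩).three_le_length
  simp only [length_cons] at hl₁ hl₂
  have ha : a ∈ p₁.support ∨ a ∈ p₂.support := by
    rw [← mem_support_append_iff, hsplit]
    exact (mem_support_rotate_iff ..).mpr c.start_mem_support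
  rcases ha with ha | ha
  · obtain ⟨c', hc', hsub, hl⟩ := hp₁.exists_isCycle_of_adj hxy.symm he₁ ha
    have hp₁c := List.Subset.trans (support_takeUntil_subset_support r hyr) hrc
    exact ⟨c', hc', List.Subset.trans hsub hp₁c, by omega⟩
  · obtain ⟨c', hc', hsub, hl⟩ := hp₂.exists_isCycle_of_adj hxy he₂ ha
    have hp₂c := List.Subset.trans (support_dropUntil_subset_support r hyr) hrc
    exact ⟨c', hc', List.Subset.trans hsub hp₂c, by omega⟩

theorem IsCycle.exists_isChordless {c : G.Walk a a} (hc : c.IsCycle) :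
    ∃ c' : G.Walk a a, c'.IsCycle ∧ c'.IsChordless ∧ c'.support ⊆ c.support := by
  induction hn : c.length using Nat.strong_induction_on generalizing c with
  | _ n ih =>
    by_cases hch : c.IsChordless
    · exact ⟨c, hc, hch, List.Subset.refl _⟩
    obtain ⟨c₁, hc₁, hsub₁, hlt⟩ := hc.exists_length_lt_of_not_isChordless hch
    obtain ⟨c₂, hc₂, hch₂, hsub₂⟩ := ih _ (hn ▸ hlt) hc₁ rfl
    exact ⟨c₂, hc₂, hch₂, List.Subset.trans hsub₂ hsub₁⟩

theorem IsChordless.rotate [DecidableEq V] {c : G.Walk a a} (hch : c.IsChordless)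
    (hu : u ∈ c.support) : (c.rotate u hu).IsChordless := by
  rw [← isInduced_toSubgraph, toSubgraph_rotate]
  exact isInduced_toSubgraph.mpr hch

theorem IsCycle.exists_isPath_notMem_support {c : G.Walk w w} (hc : c.IsCycle)
    (hx : x ∈ c.support) (hy : y ∈ c.support) (hxw : x ≠ w) (hyw : y ≠ w) :
    ∃ q : G.Walk x y, q.IsPath ∧ q.support ⊆ c.support ∧ w ∉ q.support := by
  classical
  have hnil := hc.not_nil
  have htail : c.tail.support ⊆ c.support := by
    rw [support_tail_of_not_nil c hnil]; exact List.tail_subset _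
  have hmem : ∀ {z}, z ∈ c.support → z ≠ w → z ∈ c.tail.support := by
    intro z hz hzw
    rw [← cons_support_tail hnil] at hz
    exact (List.mem_cons.mp hz).resolve_left hzw
  -- Two initial segments of the path `c.tail`, which ends at `w`, glued at their common start.
  set q₀ := (c.tail.takeUntil x (hmem hx hxw)).reverse.append (c.tail.takeUntil y (hmem hy hyw))
  have hq₀ : ∀ z ∈ q₀.support, z ∈ c.tail.support ∧ z ≠ w := by
    intro z hz
    rw [mem_support_append_iff, support_reverse, List.mem_reverse] at hz
    rcases hz with hz | hz
    · exact ⟨support_takeUntil_subset_support _ _ hz, fun h => endpoint_notMem_support_takeUntil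
        hc.isPath_tail _ hxw.symm (h ▸ hz)⟩
    · exact ⟨support_takeUntil_subset_support _ _ hz, fun h => endpoint_notMem_support_takeUntil
        hc.isPath_tail _ hyw.symm (h ▸ hz)⟩
  refine ⟨q₀.bypass, q₀.bypass_isPath, fun z hz => htail (hq₀ z ?_).1,
    fun hw => (hq₀ w (q₀.support_bypass_subset_support hw)).2 rfl⟩
  exact q₀.support_bypass_subset_support hz

theorem exists_isSubwalk_first {P : V → Prop} {p : G.Walk u v} (hx : x ∈ p.support) (hP : P x) :
    ∃ (b : V) (q : G.Walk u b), q.IsSubwalk p ∧ P b ∧ ∀ z ∈ q.support, P z → z = b := by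
  classical
  have hex : ∃ n, ∃ (b : V) (q : G.Walk u b), q.IsSubwalk p ∧ P b ∧ q.length = n :=
    ⟨_, x, p.takeUntil x hx, p.isSubwalk_takeUntil hx, hP, rfl⟩
  obtain ⟨b, q, hqp, hb, hlen⟩ := Nat.find_spec hex
  refine ⟨b, q, hqp, hb, fun z hz hPz => by_contra fun hzb => Nat.find_min hex
    (hlen ▸ length_takeUntil_lt_length hz hzb) ?_⟩
  exact ⟨z, q.takeUntil z hz, (q.isSubwalk_takeUntil hz).trans hqp, hPz, rfl⟩

end SimpleGraph.Walk

section CycleConvexity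

variable {G : SimpleGraph V} {S : Set V} {u v w : V}

def ClosesCycle (G : SimpleGraph V) (S : Set V) (u : V) : Prop :=
  ∃ c : G.Walk u u, c.IsCycle ∧ ∀ x ∈ c.support, x ∈ S ∪ {u}

theorem mem_cycInt_iff : u ∈ cycInt G S ↔ u ∈ S ∨ ClosesCycle G S u := Iff.rfl

theorem subsingleton_adj_of_not_closesCycle (hv : ¬ ClosesCycle G S v) {c : G.Walk w w}
    (hc : c.IsCycle) (hcS : ∀ x ∈ c.support, x ∈ S ∪ {w}) (hvc : v ∉ c.support) :
    {x | x ∈ c.support ∧ x ≠ w ∧ G.Adj v x}.Subsingleton := by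
  rintro x ⟨hx, hxw, hvx⟩ y ⟨hy, hyw, hvy⟩
  by_contra hxy
  obtain ⟨q, hq, hqc, hwq⟩ := hc.exists_isPath_notMem_support hx hy hxw hyw
  have hvq : v ∉ q.support := fun h => hvc (hqc h)
  have hp : (Walk.cons hvx q).IsPath := (Walk.cons_isPath_iff hvx q).mpr ⟨hq, hvq⟩
  have he : s(y, v) ∉ (Walk.cons hvx q).edges := by
    rw [Walk.edges_cons, List.mem_cons, Sym2.eq_swap, Sym2.eq_iff]
    rintro ((⟨-, rfl⟩ | ⟨rfl, -⟩) | h)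
    · exact hxy rfl
    · exact hvx.ne rfl
    · exact hvq (q.fst_mem_support_of_mem_edges h)
  obtain ⟨c', hc', hc'sub, -⟩ := hp.exists_isCycle_of_adj hvy.symm he (Walk.start_mem_support _)
  refine hv ⟨c', hc', fun z hz => ?_⟩
  rcases List.mem_cons.mp (hc'sub hz) with rfl | hz
  · exact Or.inr rfl
  · exact Or.inl ((hcS z (hqc hz)).resolve_right fun h => hwq (h ▸ hz))


theorem exists_edge_to_cycle_of_isChordless {v' t : V} (hv'S : v' ∉ S)
    (hv' : ¬ ClosesCycle G S v') {D : G.Walk v' t} (hDch : D.IsChordless) (hu : u ∈ D.support)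
    (hPu : ClosesCycle G S u) :
    ∃ v w, G.Adj v w ∧ s(v, w) ∈ D.edges ∧
      ∃ c' : G.Walk w w, c'.IsCycle ∧ v ∉ c'.support ∧
        {x | x ∈ c'.support ∧ x ≠ w ∧ G.Adj v x}.Subsingleton := by
  classical
  obtain ⟨b, q, hqD, hb, hfirst⟩ := Walk.exists_isSubwalk_first hu hPu
  have ⟨c', hc', hc'S⟩ := hb
  have hv'c' : v' ∉ c'.support := fun h =>
    (hc'S v' h).elim hv'S fun hv'b => hv' ((Set.mem_singleton_iff.mp hv'b) ▸ hb)
  obtain ⟨d, hd, hdout, hdin⟩ :=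
    q.exists_boundary_dart {x | x ∉ c'.support} hv'c' (not_not.mpr c'.start_mem_support)
  replace hdin : d.snd ∈ c'.support := not_not.mp hdin
  have hdq : d.fst ∈ q.support := q.dart_fst_mem_support_of_mem_darts hd
  have hdv : ¬ ClosesCycle G S d.fst := fun h => hdout (hfirst _ hdq h ▸ c'.start_mem_support)
  have hsub := subsingleton_adj_of_not_closesCycle hdv hc' hc'S hdout
  by_cases hvb : G.Adj d.fst b
  · exact ⟨d.fst, b, hvb, hDch.mem_edges (hqD.support_subset hdq)
      (hqD.support_subset q.end_mem_support) hvb, c', hc', hdout, hsub⟩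
  · refine ⟨d.fst, d.snd, d.adj, hqD.edges_subset (List.mem_map_of_mem hd),
      c'.rotate d.snd hdin, hc'.rotate hdin, by simpa using hdout, hsub.anti ?_⟩
    rintro x ⟨hx, -, hvx⟩
    exact ⟨(Walk.mem_support_rotate_iff ..).mp hx, by rintro rfl; exact hvb hvx, hvx⟩

end CycleConvexity

theorem stmt_13_general {V : Type*} (G : SimpleGraph V) (v' : V) (S : Set V)
    (h : v' ∈ (cycInt G)^[2] S \ (cycInt G)^[1] S) :
    ∃ (v w : V), G.Adj v w ∧
      (∃ c : G.Walk v v, c.IsCycle ∧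
        (∀ x ∈ c.support, ∀ y ∈ c.support, G.Adj x y → c.toSubgraph.Adj x y) ∧
        s(v, w) ∈ c.edges) ∧
      (∃ c' : G.Walk w w, c'.IsCycle ∧ v ∉ c'.support ∧
        {x | x ∈ c'.support ∧ x ≠ w ∧ G.Adj v x}.Subsingleton) := by
  classical
  obtain ⟨hI₂, hI₁⟩ := h
  obtain ⟨hv'S, hv'⟩ := not_or.mp (mem_cycInt_iff.not.mp hI₁)
  obtain ⟨D₀, hD₀, hD₀I⟩ : ClosesCycle G (cycInt G S) v' :=
    (mem_cycInt_iff.mp hI₂).resolve_left hI₁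
  obtain ⟨D, hD, hDch, hDD₀⟩ := hD₀.exists_isChordless
  obtain ⟨u, hu, hPu⟩ : ∃ u ∈ D.support, ClosesCycle G S u := by
    by_contra! hno
    refine hv' ⟨D, hD, fun x hx => ?_⟩
    rcases hD₀I x (hDD₀ hx) with (hxS | hxP) | hxv'
    exacts [Or.inl hxS, absurd hxP (hno x hx), Or.inr hxv']
  obtain ⟨v, w, hvw, hDvw, hw⟩ := exists_edge_to_cycle_of_isChordless hv'S hv' hDch hu hPu
  have hv : v ∈ D.support := D.fst_mem_support_of_mem_edges hDvw
  refine ⟨v, w, hvw, ⟨D.rotate v hv, hD.rotate hv, fun x hx y hy hxy => ?_,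
    (D.rotate_edges v hv).mem_iff.mpr hDvw⟩, hw⟩
  exact Walk.isInduced_toSubgraph.mpr (hDch.rotate hv) ((Walk.mem_verts_toSubgraph _).mpr hx)
    ((Walk.mem_verts_toSubgraph _).mpr hy) hxy

theorem stmt_13 {V : Type*} [Fintype V] (G : SimpleGraph V) (v' : V) (S : Set V)
    (h : v' ∈ (cycInt G)^[2] S \ (cycInt G)^[1] S) :
    ∃ (v w : V), G.Adj v w ∧
      (∃ c : G.Walk v v, c.IsCycle ∧
        (∀ x ∈ c.support, ∀ y ∈ c.support, G.Adj x y → c.toSubgraph.Adj x y) ∧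
        s(v, w) ∈ c.edges) ∧
      (∃ c' : G.Walk w w, c'.IsCycle ∧ v ∉ c'.support ∧
        {x | x ∈ c'.support ∧ x ≠ w ∧ G.Adj v x}.Subsingleton) :=
  stmt_13_general G v' S h
end

section
/- Let G be a finite graph, v a vertex, and Q a vertex set with v ∈ I^2(Q) \ I(Q) in the cycle convexity. Then there exists a hull set S ⊇ Q of G such that v ∈ I^2(S) \ I(S); in particular, the percolation time of G is at least 2. -/
open SimpleGraph Set

variable {V : Type*}

lemma cycInt_mono (G : SimpleGraph V) : Monotone (cycInt G) := by
  intro S T hST u hu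
  rcases hu with hu | ⟨w, hw, hsupp⟩
  · exact Or.inl (hST hu)
  · exact Or.inr ⟨w, hw, fun x hx => (hsupp x hx).imp (fun h => hST h) id⟩

lemma subset_cycInt (G : SimpleGraph V) (S : Set V) : S ⊆ cycInt G S :=
  Set.subset_union_left

lemma iter_mono_in_k (G : SimpleGraph V) (S : Set V) :
    Monotone (fun k => (cycInt G)^[k] S) := by
  apply monotone_nat_of_le_succ
  intro k
  rw [Function.iterate_succ_apply']
  exact subset_cycInt G _

lemma iter_subset_fixed (G : SimpleGraph V) {S T : Set V} (hT : cycInt G T = T)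
    (hST : S ⊆ T) : ∀ k, (cycInt G)^[k] S ⊆ T := by
  intro k
  induction k with
  | zero => exact hST
  | succ k ih =>
    rw [Function.iterate_succ_apply']
    calc cycInt G ((cycInt G)^[k] S) ⊆ cycInt G T := cycInt_mono G ih
    _ = T := hT

lemma hull_subset_fixed (G : SimpleGraph V) {S T : Set V} (hT : cycInt G T = T)
    (hST : S ⊆ T) : cycHull G S ⊆ T :=
  Set.iUnion_subset (iter_subset_fixed G hT hST)

lemma subset_cycHull (G : SimpleGraph V) (S : Set V) : S ⊆ cycHull G S :=
  Set.subset_iUnion_of_subset 0 (by rfl)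

lemma exists_stable [Fintype V] (G : SimpleGraph V) (S : Set V) :
    ∃ i, cycHull G S = (cycInt G)^[i] S ∧ cycInt G ((cycInt G)^[i] S) = (cycInt G)^[i] S := by
  have : ¬ Function.Injective (fun k => (cycInt G)^[k] S) := by
    intro hinj
    exact (Finite.of_injective _ hinj).not_infinite inferInstance
  simp only [Function.Injective, not_forall] at this
  obtain ⟨i, j, hij, hne⟩ := this
  wlog hlt : i < j generalizing i j
  · exact this j i hij.symm (Ne.symm hne) (lt_of_le_of_ne (not_lt.mp hlt) (Ne.symm hne))
  have hfix : cycInt G ((cycInt G)^[i] S) = (cycInt G)^[i] S := by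
    apply Set.Subset.antisymm
    · calc cycInt G ((cycInt G)^[i] S) = (cycInt G)^[i+1] S :=
        (Function.iterate_succ_apply' _ _ _).symm
      _ ⊆ (cycInt G)^[j] S := iter_mono_in_k G S hlt
      _ = (cycInt G)^[i] S := hij.symm
    · exact subset_cycInt G _
  refine ⟨i, ?_, hfix⟩
  apply Set.Subset.antisymm
  · exact hull_subset_fixed G hfix (fun x hx => iter_mono_in_k G S (Nat.zero_le i) hx)
  · exact Set.subset_iUnion (fun k => (cycInt G)^[k] S) i

lemma cycInt_cycHull [Fintype V] (G : SimpleGraph V) (S : Set V) :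
    cycInt G (cycHull G S) = cycHull G S := by
  obtain ⟨i, h1, h2⟩ := exists_stable G S
  rw [h1, h2]

lemma mem_support_rotate [DecidableEq V] {G : SimpleGraph V} {u v x : V} (c : G.Walk v v)
    (h : u ∈ c.support) (hx : x ∈ (c.rotate u h).support) : x ∈ c.support := by
  rw [SimpleGraph.Walk.support_eq_cons, List.mem_cons] at hx
  rcases hx with hx | hx
  · exact hx ▸ h
  · have := (SimpleGraph.Walk.support_rotate c u h).mem_iff.mp hx
    rw [SimpleGraph.Walk.support_eq_cons c]
    exact List.mem_cons_of_mem _ this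

lemma growth [Fintype V] (G : SimpleGraph V) (S : Set V) (hS : IsHullSet G S) :
    ∀ k, (cycInt G)^[k] S ≠ Set.univ → k ≤ Fintype.card V := by
  have key : ∀ k, (cycInt G)^[k] S ≠ Set.univ → k ≤ ((cycInt G)^[k] S).ncard := by
    intro k
    induction k with
    | zero => intro _; exact Nat.zero_le _
    | succ k ih =>
      intro hne
      have hprev : (cycInt G)^[k] S ≠ Set.univ := by
        intro heq
        apply hne
        apply Set.eq_univ_of_univ_subset
        rw [← heq]
        exact iter_mono_in_k G S (Nat.le_succ k)
      have hssub : (cycInt G)^[k] S ⊂ (cycInt G)^[k+1] S := by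
        refine ⟨iter_mono_in_k G S (Nat.le_succ k), fun hle => ?_⟩
        have hfix : cycInt G ((cycInt G)^[k] S) = (cycInt G)^[k] S := by
          apply Set.Subset.antisymm
          · rw [Function.iterate_succ_apply'] at hle; exact hle
          · exact subset_cycInt G _
        have : cycHull G S ⊆ (cycInt G)^[k] S :=
          hull_subset_fixed G hfix (fun x hx => iter_mono_in_k G S (Nat.zero_le k) hx)
        rw [hS] at this
        exact hprev (Set.eq_univ_of_univ_subset this)
      have h1 := Set.ncard_lt_ncard hssub (Set.toFinite _)
      have h2 := ih hprev
      omega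
  intro k hk
  calc k ≤ ((cycInt G)^[k] S).ncard := key k hk
  _ ≤ (Set.univ : Set V).ncard := Set.ncard_le_ncard (Set.subset_univ _) (Set.toFinite _)
  _ = Fintype.card V := by rw [Set.ncard_univ, Nat.card_eq_fintype_card]

theorem stmt_14 {V : Type*} [Fintype V] (G : SimpleGraph V) (v : V) (Q : Set V)
    (h : v ∈ (cycInt G)^[2] Q \ (cycInt G)^[1] Q) :
    (∃ S : Set V, Q ⊆ S ∧ IsHullSet G S ∧ v ∈ (cycInt G)^[2] S \ (cycInt G)^[1] S) ∧
      2 ≤ percTime G := by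
  classical
  obtain ⟨hv2, hv1⟩ := h
  rw [Function.iterate_one] at hv1
  -- maximal S with Q ⊆ S and v ∉ cycInt G S
  obtain ⟨S, ⟨hQS, hvS⟩, hmax⟩ :=
    Set.Finite.exists_maximalFor (id : Set V → Set V)
      {S : Set V | Q ⊆ S ∧ v ∉ cycInt G S} (Set.toFinite _) ⟨Q, Set.Subset.rfl, hv1⟩
  have hv2S : v ∈ (cycInt G)^[2] S := (cycInt_mono G).iterate 2 hQS hv2
  have hvhull : v ∈ cycHull G S := Set.subset_iUnion (fun k => (cycInt G)^[k] S) 2 hv2S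
  have hhull : IsHullSet G S := by
    apply Set.eq_univ_of_forall
    intro u
    by_contra hu
    have huS : u ∉ S := fun h => hu (subset_cycHull G S h)
    have huv : u ≠ v := fun h => hu (h ▸ hvhull)
    have hne : S ≠ S ∪ {u} := fun h => huS (h ▸ (Set.mem_union_right S rfl : u ∈ S ∪ {u}))
    have hmem : v ∈ cycInt G (S ∪ {u}) := by
      by_contra hnot
      exact hne (Set.Subset.antisymm Set.subset_union_left (hmax (j := S ∪ {u}) ⟨hQS.trans Set.subset_union_left, hnot⟩ Set.subset_union_left))
    rcases hmem with hmem | ⟨w, hw, hsupp⟩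
    · rcases hmem with hmem | hmem
      · exact hvS (subset_cycInt G S hmem)
      · exact huv (Set.eq_of_mem_singleton hmem).symm
    · have huw : u ∈ w.support := by
        by_contra huw
        apply hvS
        exact Or.inr ⟨w, hw, fun x hx => by
          rcases hsupp x hx with (hx' | hx') | hx'
          · exact Or.inl hx'
          · exact absurd (Set.eq_of_mem_singleton hx' ▸ hx) huw
          · exact Or.inr hx'⟩
      -- rotate the cycle to be centered at u; its support lies in hull S ∪ {u}
      have : u ∈ cycInt G (cycHull G S) := by
        refine Or.inr ⟨w.rotate u huw, hw.rotate huw, fun x hx => ?_⟩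
        have hxw := mem_support_rotate w huw hx
        rcases hsupp x hxw with (hx' | hx') | hx'
        · exact Or.inl (subset_cycHull G S hx')
        · exact Or.inr hx'
        · exact Or.inl (Set.eq_of_mem_singleton hx' ▸ hvhull)
      rw [cycInt_cycHull] at this
      exact hu this
  have hfinal : v ∈ (cycInt G)^[2] S \ (cycInt G)^[1] S :=
    ⟨hv2S, by rw [Function.iterate_one]; exact hvS⟩
  refine ⟨⟨S, hQS, hhull, hfinal⟩, ?_⟩
  apply le_csSup
  · refine ⟨Fintype.card V + 1, fun k hk => ?_⟩
    obtain ⟨hk0, T, hT, hTne⟩ := hk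
    have := growth G T hT (k - 1) hTne
    omega
  · exact ⟨by norm_num, S, hhull, by
      rw [show (2:ℕ) - 1 = 1 from rfl, Function.iterate_one]
      intro heq
      exact hvS (heq ▸ Set.mem_univ v)⟩
end

section
/- Let G be an (S,C,R)-pseudo-split graph with minimum degree at least 2. Then for any two adjacent vertices v, w with v, w ∈ C ∪ R, the convex hull of {v, w} in the cycle convexity is V(G). -/
open SimpleGraph Set

variable {V : Type*}

lemma triangle_mem_cycInt {G : SimpleGraph V} {T : Set V} {u a b : V}
    (ha : a ∈ T) (hb : b ∈ T) (hua : G.Adj u a) (hab : G.Adj a b) (hbu : G.Adj b u) :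
    u ∈ cycInt G T := by
  right
  refine ⟨Walk.cons hua (Walk.cons hab (Walk.cons hbu Walk.nil)), ?_, ?_⟩
  · have h1 := hua.ne
    have h2 := hab.ne
    have h3 := hbu.ne
    simp [Walk.isCycle_def, Walk.isTrail_def, Sym2.eq, Sym2.rel_iff']
    aesop
  · intro x hx
    simp [Walk.support] at hx
    rcases hx with h | h | h | h <;> simp [h, ha, hb]

theorem stmt_17 {V : Type*} [Fintype V] (G : SimpleGraph V) (S C R : Set V)
    (hSC : Disjoint S C) (hSR : Disjoint S R) (hCR : Disjoint C R)
    (hcover : S ∪ C ∪ R = Set.univ)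
    (hS2 : 2 ≤ S.ncard) (hC2 : 2 ≤ C.ncard)
    (hSindep : S.Pairwise fun a b => ¬ G.Adj a b)
    (hCclique : C.Pairwise fun a b => G.Adj a b)
    (hSR' : ∀ s ∈ S, ∀ r ∈ R, ¬ G.Adj s r)
    (hCR' : ∀ c ∈ C, ∀ r ∈ R, G.Adj c r)
    (hCS : ∀ c ∈ C, ∃ s ∈ S, G.Adj c s)
    (hSC' : ∀ s ∈ S, ∃ c ∈ C, ¬ G.Adj s c)
    (hdeg : ∀ v : V, 2 ≤ (G.neighborSet v).ncard)
    (v w : V) (hv : v ∈ C ∪ R) (hw : w ∈ C ∪ R) (hvw : G.Adj v w) :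
    cycHull G {v, w} = Set.univ := by
  set T0 : Set V := {v, w} with hT0
  set T1 := cycInt G T0 with hT1
  set T2 := cycInt G T1 with hT2
  set T3 := cycInt G T2 with hT3
  have hsub : ∀ T : Set V, T ⊆ cycInt G T := fun T => Set.subset_union_left
  -- any vertex of C∪R is adjacent to both v and w (unless equal)
  have adjv : ∀ c ∈ C, c ≠ v → G.Adj c v := by
    intro c hc hne
    rcases hv with h | h
    · exact hCclique hc h hne
    · exact hCR' c hc v h
  have adjw : ∀ c ∈ C, c ≠ w → G.Adj c w := by
    intro c hc hne
    rcases hw with h | h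
    · exact hCclique hc h hne
    · exact hCR' c hc w h
  have hC1 : C ⊆ T1 := by
    intro c hc
    by_cases h1 : c = v
    · exact hsub T0 (by simp [hT0, h1])
    by_cases h2 : c = w
    · exact hsub T0 (by simp [hT0, h2])
    exact triangle_mem_cycInt (by simp [hT0]) (by simp [hT0])
      (adjv c hc h1) hvw ((adjw c hc h2).symm)
  -- two distinct vertices of C
  obtain ⟨c1, hc1, c2, hc2, hc12⟩ := (Set.one_lt_ncard (Set.toFinite C)).mp hC2
  have hR2 : R ⊆ T2 := by
    intro r hr
    exact triangle_mem_cycInt (hC1 hc1) (hC1 hc2)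
      ((hCR' c1 hc1 r hr).symm) (hCclique hc1 hc2 hc12) (hCR' c2 hc2 r hr)
  have hC2' : C ⊆ T2 := hC1.trans (hsub T1)
  have hS3 : S ⊆ T3 := by
    intro s hs
    obtain ⟨a, ha, b, hb, hab⟩ :=
      (Set.one_lt_ncard (Set.toFinite _)).mp (hdeg s)
    have hNC : ∀ x, G.Adj s x → x ∈ C := by
      intro x hx
      have : x ∈ S ∪ C ∪ R := hcover ▸ Set.mem_univ x
      rcases this with (h | h) | h
      · exact absurd hx (hSindep hs h (fun he => G.irrefl (he ▸ hx)))
      · exact h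
      · exact absurd hx (hSR' s hs x h)
    have haC : a ∈ C := hNC a ha
    have hbC : b ∈ C := hNC b hb
    exact triangle_mem_cycInt (hC2' haC) (hC2' hbC) ha (hCclique haC hbC hab) hb.symm
  have hT3univ : T3 = Set.univ := by
    apply Set.eq_univ_of_forall
    intro x
    have : x ∈ S ∪ C ∪ R := hcover ▸ Set.mem_univ x
    rcases this with (h | h) | h
    · exact hS3 h
    · exact hsub T2 (hC2' h)
    · exact hsub T2 (hR2 h)
  apply Set.eq_univ_of_univ_subset
  rw [← hT3univ]
  have h3 : T3 = (cycInt G)^[3] T0 := by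
    simp [Function.iterate_succ', hT3, hT2, hT1]
  rw [h3]
  exact Set.subset_iUnion (fun k => (cycInt G)^[k] T0) 3
end
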